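/- Let (μ_k) be probability measures on a compact metric space converging weakly to μ, and let P_k, P be weak Feller Markov kernels with ‖P_k f - P f‖_∞ → 0 for all bounded continuous f. If μ_k P_k = μ_k for all k, then μP = μ. -/

import Mathlib

open MeasureTheory Filter ProbabilityTheory Set Topology BoundedContinuousFunction

/-! The invariance `μ_k P_k = μ_k` says `∫ P_k f dμ_k = ∫ f dμ_k` for every bounded continuous `f`.
As `k → ∞`, the right side tends to `∫ f dμ`. On the left, `P_k f` is uniformly close to `P f`,
so `∫ P_k f dμ_k` is close to `∫ P f dμ_k`, which tends to `∫ P f dμ` because the Feller property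
makes `P f` bounded continuous. Hence `∫ f d(μP) = ∫ P f dμ = ∫ f dμ` for all such `f`, and
bounded continuous functions separate finite Borel measures on a metric space. -/

section

variable {α β : Type*} [MeasurableSpace α] [MeasurableSpace β]

lemma MeasureTheory.Measure.integral_bind {E : Type*} [NormedAddCommGroup E] [NormedSpace ℝ E]
    {μ : Measure α} {κ : Kernel α β} {f : β → E} (hf : Integrable f (μ.bind κ)) :
    ∫ y, f y ∂μ.bind κ = ∫ x, ∫ y, f y ∂κ x ∂μ := by
  rw [Measure.comp_eq_comp_const_apply] at hf ⊢
  rw [Kernel.integral_comp hf, Kernel.const_apply]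

lemma abs_integral_sub_le_iSup {ν : Measure α} [IsProbabilityMeasure ν] {g h : α → ℝ}
    (hg : Integrable g ν) (hh : Integrable h ν) (hbdd : BddAbove (range fun x => |g x - h x|)) :
    |∫ x, g x ∂ν - ∫ x, h x ∂ν| ≤ ⨆ x, |g x - h x| := by
  rw [← integral_sub hg hh]
  simpa using norm_integral_le_of_norm_le_const (μ := ν)
    (Eventually.of_forall fun x => (Real.norm_eq_abs _).trans_le (le_ciSup hbdd x))

namespace ProbabilityTheory.Kernel

variable [TopologicalSpace β] [OpensMeasurableSpace β]

lemma integrable_integral_boundedContinuousFunction (κ : Kernel α β) [IsMarkovKernel κ]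
    (ν : Measure α) [IsFiniteMeasure ν] (f : β →ᵇ ℝ) :
    Integrable (fun x => ∫ y, f y ∂κ x) ν :=
  .of_bound f.continuous.stronglyMeasurable.integral_kernel.aestronglyMeasurable ‖f‖
    (Eventually.of_forall fun x => f.norm_integral_le_norm (κ x))

lemma bddAbove_range_abs_integral_sub (κ η : Kernel α β) [IsMarkovKernel κ] [IsMarkovKernel η]
    (f : β →ᵇ ℝ) :
    BddAbove (range fun x => |∫ y, f y ∂κ x - ∫ y, f y ∂η x|) := by
  refine ⟨‖f‖ + ‖f‖, forall_mem_range.2 fun x => (abs_sub _ _).trans ?_⟩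
  exact add_le_add (f.norm_integral_le_norm (κ x)) (f.norm_integral_le_norm (η x))

lemma tendsto_integral_integral_sub_of_tendsto_iSup {ι : Type*} {l : Filter ι}
    (κs : ι → Kernel α β) [∀ i, IsMarkovKernel (κs i)] (κ : Kernel α β) [IsMarkovKernel κ]
    (νs : ι → Measure α) [∀ i, IsProbabilityMeasure (νs i)] (f : β →ᵇ ℝ)
    (hf : Tendsto (fun i => ⨆ x, |∫ y, f y ∂κs i x - ∫ y, f y ∂κ x|) l (𝓝 0)) :
    Tendsto (fun i => ∫ x, ∫ y, f y ∂κs i x ∂νs i - ∫ x, ∫ y, f y ∂κ x ∂νs i) l (𝓝 0) :=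
  squeeze_zero_norm (fun i => abs_integral_sub_le_iSup
    ((κs i).integrable_integral_boundedContinuousFunction _ f)
    (κ.integrable_integral_boundedContinuousFunction _ f)
    (bddAbove_range_abs_integral_sub (κs i) κ f)) hf

end ProbabilityTheory.Kernel

end

theorem stmt_12_general {Z : Type*} [MeasurableSpace Z] [MetricSpace Z]
    [BorelSpace Z]
    (μseq : ℕ → Measure Z) (hprob : ∀ k, IsProbabilityMeasure (μseq k))
    (μ : Measure Z) [IsProbabilityMeasure μ]
    (hweak : ∀ f : BoundedContinuousFunction Z ℝ,
      Tendsto (fun k => ∫ z, f z ∂(μseq k)) atTop (nhds (∫ z, f z ∂μ)))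
    (Pk : ℕ → ProbabilityTheory.Kernel Z Z) (hPk : ∀ k, ProbabilityTheory.IsMarkovKernel (Pk k))
    (P : ProbabilityTheory.Kernel Z Z) [ProbabilityTheory.IsMarkovKernel P]
    (hFeller : ∀ f : Z → ℝ, Continuous f → Continuous (fun z => ∫ y, f y ∂(P z)))
    (hunif : ∀ f : BoundedContinuousFunction Z ℝ,
      Tendsto (fun k => ⨆ z, |∫ y, f y ∂(Pk k z) - ∫ y, f y ∂(P z)|) atTop (nhds 0))
    (hinvk : ∀ k, (μseq k).bind (Pk k) = μseq k) :
    μ.bind P = μ := by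
  have := hprob
  have := hPk
  refine ext_of_forall_integral_eq_of_IsFiniteMeasure fun f => ?_
  let Pf : Z →ᵇ ℝ := .ofNormedAddCommGroup _ (hFeller f f.continuous) ‖f‖
    fun z => f.norm_integral_le_norm (P z)
  have hPf (z : Z) : Pf z = ∫ y, f y ∂P z := rfl
  have hinv (k : ℕ) : ∫ z, ∫ y, f y ∂Pk k z ∂μseq k = ∫ z, f z ∂μseq k := by
    rw [← Measure.integral_bind (f.integrable _), hinvk k]
  have hlim : Tendsto (fun k => ∫ z, f z ∂μseq k) atTop (𝓝 (∫ z, Pf z ∂μ)) := by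
    simpa [hinv, hPf] using
      (Kernel.tendsto_integral_integral_sub_of_tendsto_iSup Pk P μseq f (hunif f)).add (hweak Pf)
  rw [Measure.integral_bind (f.integrable _)]
  exact tendsto_nhds_unique hlim (hweak f)

theorem stmt_12 {Z : Type*} [MeasurableSpace Z] [MetricSpace Z] [CompactSpace Z]
    [BorelSpace Z]
    (μseq : ℕ → Measure Z) (hprob : ∀ k, IsProbabilityMeasure (μseq k))
    (μ : Measure Z) [IsProbabilityMeasure μ]
    (hweak : ∀ f : BoundedContinuousFunction Z ℝ,
      Tendsto (fun k => ∫ z, f z ∂(μseq k)) atTop (nhds (∫ z, f z ∂μ)))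
    (Pk : ℕ → ProbabilityTheory.Kernel Z Z) (hPk : ∀ k, ProbabilityTheory.IsMarkovKernel (Pk k))
    (P : ProbabilityTheory.Kernel Z Z) [ProbabilityTheory.IsMarkovKernel P]
    (hFellerk : ∀ k, ∀ f : Z → ℝ, Continuous f → Continuous (fun z => ∫ y, f y ∂(Pk k z)))
    (hFeller : ∀ f : Z → ℝ, Continuous f → Continuous (fun z => ∫ y, f y ∂(P z)))
    (hunif : ∀ f : BoundedContinuousFunction Z ℝ,
      Tendsto (fun k => ⨆ z, |∫ y, f y ∂(Pk k z) - ∫ y, f y ∂(P z)|) atTop (nhds 0))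
    (hinvk : ∀ k, (μseq k).bind (Pk k) = μseq k) :
    μ.bind P = μ :=
  stmt_12_general μseq hprob μ hweak Pk hPk P hFeller hunif hinvk
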